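/- Let Ω ⊆ ℝ² be open, v ∈ C^∞(Ω), p ∈ (1,∞), and let x ∈ Ω be a point with Dv(x) ≠ 0 at which |Dv(x)|² Δv(x) + (p − 2) Δ∞v(x) = 0 (the p-Laplace equation in nondivergence form). Let W(y) = |Dv(y)|^{−1} Dv(y), which is C¹ on a neighborhood of x, and write Λ := |D²v(x) Dv(x)|² / |Dv(x)|⁴ (which equals |D(log|Dv|)(x)|²). Then: if p = 2, |DW(x)|² = Λ; if p > 2, |DW(x)|² ≥ Λ; and if 1 < p < 2, (p − 1)² Λ ≤ |DW(x)|² ≤ Λ. -/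

import Mathlib

open Real MeasureTheory
open scoped RealInnerProductSpace

noncomputable section

/-- The Euclidean plane ℝ². -/
abbrev E2 : Type := EuclideanSpace ℝ (Fin 2)

/-- Standard basis vector. -/
def ee (i : Fin 2) : E2 := EuclideanSpace.single i (1 : ℝ)

/-- Partial derivative ∂ᵢf. -/
def pd (i : Fin 2) (f : E2 → ℝ) (x : E2) : ℝ := fderiv ℝ f x (ee i)

/-- Second partial derivative ∂ᵢ∂ⱼf. -/
def pd2 (i j : Fin 2) (f : E2 → ℝ) (x : E2) : ℝ := pd i (pd j f) x

/-- |Df|², squared Euclidean norm of the gradient. -/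
def gradSq (f : E2 → ℝ) (x : E2) : ℝ := (pd 0 f x) ^ 2 + (pd 1 f x) ^ 2

/-- |Df|, Euclidean norm of the gradient. -/
def gradNorm (f : E2 → ℝ) (x : E2) : ℝ := Real.sqrt (gradSq f x)

/-- Laplacian Δf = tr D²f. -/
def lap (f : E2 → ℝ) (x : E2) : ℝ := pd2 0 0 f x + pd2 1 1 f x

/-- ∞-Laplacian Δ∞f = D²f Df · Df. -/
def infLap (f : E2 → ℝ) (x : E2) : ℝ :=
  pd2 0 0 f x * pd 0 f x * pd 0 f x + pd2 0 1 f x * pd 0 f x * pd 1 f x +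
  pd2 1 0 f x * pd 1 f x * pd 0 f x + pd2 1 1 f x * pd 1 f x * pd 1 f x

/-- |D²f|², squared Frobenius norm of the Hessian. -/
def hessFrobSq (f : E2 → ℝ) (x : E2) : ℝ :=
  (pd2 0 0 f x) ^ 2 + (pd2 0 1 f x) ^ 2 + (pd2 1 0 f x) ^ 2 + (pd2 1 1 f x) ^ 2

/-- det D²f, determinant of the Hessian. -/
def detHess (f : E2 → ℝ) (x : E2) : ℝ :=
  pd2 0 0 f x * pd2 1 1 f x - pd2 0 1 f x * pd2 1 0 f x

/-- |D²f Df|². -/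
def hessGradSq (f : E2 → ℝ) (x : E2) : ℝ :=
  (pd2 0 0 f x * pd 0 f x + pd2 0 1 f x * pd 1 f x) ^ 2 +
  (pd2 1 0 f x * pd 0 f x + pd2 1 1 f x * pd 1 f x) ^ 2

/-- Jacobian determinant of the planar map with components `F 0`, `F 1`. -/
def jdet (F : Fin 2 → E2 → ℝ) (x : E2) : ℝ :=
  pd 0 (F 0) x * pd 1 (F 1) x - pd 1 (F 0) x * pd 0 (F 1) x

/-- Squared Frobenius norm of the Jacobian of the planar map with components `F 0`, `F 1`. -/
def jFrobSq (F : Fin 2 → E2 → ℝ) (x : E2) : ℝ :=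
  (pd 0 (F 0) x) ^ 2 + (pd 1 (F 0) x) ^ 2 + (pd 0 (F 1) x) ^ 2 + (pd 1 (F 1) x) ^ 2

/-- Df · Dg. -/
def gradDot (f g : E2 → ℝ) (x : E2) : ℝ :=
  pd 0 f x * pd 0 g x + pd 1 f x * pd 1 g x

/-- D²ψ Dv · Dv. -/
def hessQuad (ψ v : E2 → ℝ) (x : E2) : ℝ :=
  pd2 0 0 ψ x * pd 0 v x * pd 0 v x + pd2 0 1 ψ x * pd 0 v x * pd 1 v x +
  pd2 1 0 ψ x * pd 1 v x * pd 0 v x + pd2 1 1 ψ x * pd 1 v x * pd 1 v x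

/-- (D²v Dv) · Dψ. -/
def hessGradDot (v ψ : E2 → ℝ) (x : E2) : ℝ :=
  (pd2 0 0 v x * pd 0 v x + pd2 0 1 v x * pd 1 v x) * pd 0 ψ x +
  (pd2 1 0 v x * pd 0 v x + pd2 1 1 v x * pd 1 v x) * pd 1 ψ x

/-- Smooth compactly supported test function on Ω. -/
def IsTestOn (ψ : E2 → ℝ) (Ω : Set E2) : Prop :=
  ContDiff ℝ (⊤ : ℕ∞) ψ ∧ HasCompactSupport ψ ∧ tsupport ψ ⊆ Ω

/-- Components of W = |Dv|⁻¹ Dv. -/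
def Wcomp (v : E2 → ℝ) (i : Fin 2) : E2 → ℝ := fun y => (gradNorm v y)⁻¹ * pd i v y

/-!
Write `ν = Dv/|Dv|`, `ν⊥` for the rotated frame and `α, β, δ` for the entries `D²v ν·ν`,
`D²v ν·ν⊥`, `D²v ν⊥·ν⊥` of `D²v/|Dv|`; multiplied by `|Dv|³` they are `infLap`,
`hessGradPerp` and `gradSq * lap - infLap`. Since `DW = D²v (I - ν ⊗ ν)/|Dv|` and `D²v`
is symmetric, `|DW|² = β² + δ²`, whereas `Λ = α² + β²`. The equation says `δ = -(p - 1) α`, so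
`|DW|² = β² + (p - 1)² α²` and everything reduces to comparing `(p - 1)²` with `1`.
-/

/-- `D²f Df · Df⊥` with `Df⊥ = (-∂₁f, ∂₀f)`. -/
def hessGradPerp (f : E2 → ℝ) (x : E2) : ℝ :=
  -(pd2 0 0 f x * pd 0 f x + pd2 0 1 f x * pd 1 f x) * pd 1 f x +
  (pd2 1 0 f x * pd 0 f x + pd2 1 1 f x * pd 1 f x) * pd 0 f x

lemma gradSq_nonneg (f : E2 → ℝ) (x : E2) : 0 ≤ gradSq f x := by
  unfold gradSq; positivity

lemma sq_gradNorm (f : E2 → ℝ) (x : E2) : gradNorm f x ^ 2 = gradSq f x :=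
  Real.sq_sqrt (gradSq_nonneg f x)

lemma gradSq_mul_hessGradSq (f : E2 → ℝ) (x : E2) :
    gradSq f x * hessGradSq f x = infLap f x ^ 2 + hessGradPerp f x ^ 2 := by
  unfold gradSq hessGradSq infLap hessGradPerp
  ring

lemma sum_sq_comparisons {a m s c J L : ℝ} (hc : 0 < c) (hJ : c * J = m ^ 2 + s ^ 2 * a ^ 2)
    (hL : c * L = a ^ 2 + m ^ 2) :
    (s ^ 2 = 1 → J = L) ∧ (1 ≤ s ^ 2 → L ≤ J) ∧ (s ^ 2 ≤ 1 → s ^ 2 * L ≤ J ∧ J ≤ L) := by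
  have hJL : c * (J - L) = (s ^ 2 - 1) * a ^ 2 := by linear_combination hJ - hL
  have hJsL : c * (J - s ^ 2 * L) = (1 - s ^ 2) * m ^ 2 := by linear_combination hJ - s ^ 2 * hL
  refine ⟨fun hs => ?_, fun hs => ?_, fun hs => ⟨?_, ?_⟩⟩
  · have : c * (J - L) = 0 := by rw [hJL, hs]; ring
    linarith [(mul_eq_zero.1 this).resolve_left hc.ne']
  · nlinarith [mul_nonneg (sub_nonneg.2 hs) (sq_nonneg a)]
  · nlinarith [mul_nonneg (sub_nonneg.2 hs) (sq_nonneg m)]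
  · nlinarith [mul_nonneg (sub_nonneg.2 hs) (sq_nonneg a)]

section Calculus

variable {f g : E2 → ℝ} {x : E2}

lemma differentiableAt_fderiv_of_contDiffAt_two (hf : ContDiffAt ℝ 2 f x) :
    DifferentiableAt ℝ (fderiv ℝ f) x :=
  (hf.fderiv_right (m := 1) (by norm_num)).differentiableAt one_ne_zero

lemma differentiableAt_pd (hf : ContDiffAt ℝ 2 f x) (k : Fin 2) :
    DifferentiableAt ℝ (pd k f) x :=
  (differentiableAt_fderiv_of_contDiffAt_two hf).clm_apply (differentiableAt_const _)

lemma pd2_comm (hf : ContDiffAt ℝ 2 f x) (i j : Fin 2) : pd2 i j f x = pd2 j i f x := by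
  have hsymm : IsSymmSndFDerivAt ℝ f x :=
    hf.isSymmSndFDerivAt (by simp [minSmoothness_of_isRCLikeNormedField])
  have hpd2 : ∀ i j, pd2 i j f x = fderiv ℝ (fderiv ℝ f) x (ee i) (ee j) := fun i j => by
    change fderiv ℝ (fun y => fderiv ℝ f y (ee j)) x (ee i) = _
    rw [fderiv_clm_apply (differentiableAt_fderiv_of_contDiffAt_two hf)
      (differentiableAt_const _)]
    simp
  rw [hpd2, hpd2, hsymm]

lemma pd_mul (hf : DifferentiableAt ℝ f x) (hg : DifferentiableAt ℝ g x) (i : Fin 2) :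
    pd i (fun y => f y * g y) x = f x * pd i g x + g x * pd i f x := by
  simp [pd, fderiv_fun_mul hf hg]

lemma HasDerivAt.pd_comp {φ : ℝ → ℝ} {φ' : ℝ} (hφ : HasDerivAt φ φ' (f x))
    (hf : DifferentiableAt ℝ f x) (i : Fin 2) :
    pd i (fun y => φ (f y)) x = φ' * pd i f x := by
  have h : HasFDerivAt (fun y => φ (f y)) (φ' • fderiv ℝ f x) x :=
    hφ.comp_hasFDerivAt x hf.hasFDerivAt
  simp [pd, h.fderiv]

lemma differentiableAt_gradSq (hf : ContDiffAt ℝ 2 f x) : DifferentiableAt ℝ (gradSq f) x :=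
  ((differentiableAt_pd hf 0).pow 2).add ((differentiableAt_pd hf 1).pow 2)

lemma pd_gradSq (hf : ContDiffAt ℝ 2 f x) (i : Fin 2) :
    pd i (gradSq f) x = 2 * (pd2 i 0 f x * pd 0 f x + pd2 i 1 f x * pd 1 f x) := by
  change fderiv ℝ (fun y => pd 0 f y ^ 2 + pd 1 f y ^ 2) x (ee i) = _
  rw [fderiv_fun_add (f := fun y => pd 0 f y ^ 2) (g := fun y => pd 1 f y ^ 2)
      ((differentiableAt_pd hf 0).pow 2) ((differentiableAt_pd hf 1).pow 2),
    fderiv_fun_pow _ (differentiableAt_pd hf 0), fderiv_fun_pow _ (differentiableAt_pd hf 1)]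
  simp only [pd2, pd, _root_.add_apply, _root_.smul_apply, smul_eq_mul]
  ring

lemma pd_inv_gradNorm (hf : ContDiffAt ℝ 2 f x) (hq : gradSq f x ≠ 0) (i : Fin 2) :
    pd i (fun y => (gradNorm f y)⁻¹) x =
      -(pd2 i 0 f x * pd 0 f x + pd2 i 1 f x * pd 1 f x) / (gradSq f x * gradNorm f x) := by
  have hq0 : 0 < gradSq f x := (gradSq_nonneg f x).lt_of_ne' hq
  have hφ : HasDerivAt (fun t => (√t)⁻¹) (-(1 / (2 * √(gradSq f x))) / √(gradSq f x) ^ 2)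
      (gradSq f x) :=
    (Real.hasDerivAt_sqrt hq).inv (Real.sqrt_ne_zero'.2 hq0)
  change pd i (fun y => (√(gradSq f y))⁻¹) x = _ / (gradSq f x * √(gradSq f x))
  rw [hφ.pd_comp (differentiableAt_gradSq hf), pd_gradSq hf]
  have hr : √(gradSq f x) ≠ 0 := Real.sqrt_ne_zero'.2 hq0
  field_simp
  rw [Real.sq_sqrt hq0.le]
  ring

lemma pd_Wcomp (hf : ContDiffAt ℝ 2 f x) (hq : gradSq f x ≠ 0) (i j : Fin 2) :
    pd i (Wcomp f j) x =
      (gradSq f x * pd2 i j f x - (pd2 i 0 f x * pd 0 f x + pd2 i 1 f x * pd 1 f x) * pd j f x) /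
        (gradSq f x * gradNorm f x) := by
  have hr : gradNorm f x ≠ 0 := Real.sqrt_ne_zero'.2 ((gradSq_nonneg f x).lt_of_ne' hq)
  have hinv : DifferentiableAt ℝ (fun y => (gradNorm f y)⁻¹) x :=
    ((differentiableAt_gradSq hf).sqrt hq).inv hr
  unfold Wcomp
  rw [pd_mul hinv (differentiableAt_pd hf j), pd_inv_gradNorm hf hq]
  simp only [pd2]
  field_simp
  ring

lemma gradSq_pow_three_mul_jFrobSq_Wcomp (hf : ContDiffAt ℝ 2 f x) (hq : gradSq f x ≠ 0) :
    gradSq f x ^ 3 * jFrobSq (Wcomp f) x =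
      hessGradPerp f x ^ 2 + (gradSq f x * lap f x - infLap f x) ^ 2 := by
  have hr : (gradSq f x * gradNorm f x) ^ 2 = gradSq f x ^ 3 := by
    rw [mul_pow, sq_gradNorm]; ring
  simp only [jFrobSq, pd_Wcomp hf hq, div_pow, hr]
  field_simp
  simp only [gradSq, hessGradPerp, lap, infLap, pd2_comm hf 1 0]
  ring

end Calculus

/-- comparisons between |DW|² and |D log|Dv||² for W = |Dv|⁻¹Dv at a
point where the p-Laplace equation holds in nondivergence form and Dv ≠ 0. -/
theorem stmt_10 (Ω : Set E2) (hΩ : IsOpen Ω) (v : E2 → ℝ)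
    (hv : ContDiffOn ℝ (⊤ : ℕ∞) v Ω) (p : ℝ) (hp : 1 < p)
    (x : E2) (hx : x ∈ Ω) (hgrad : gradSq v x ≠ 0)
    (hpl : gradSq v x * lap v x + (p - 2) * infLap v x = 0) :
    (p = 2 → jFrobSq (Wcomp v) x = hessGradSq v x / (gradSq v x) ^ 2) ∧
    (2 < p → hessGradSq v x / (gradSq v x) ^ 2 ≤ jFrobSq (Wcomp v) x) ∧
    (p < 2 →
      (p - 1) ^ 2 * (hessGradSq v x / (gradSq v x) ^ 2) ≤ jFrobSq (Wcomp v) x ∧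
      jFrobSq (Wcomp v) x ≤ hessGradSq v x / (gradSq v x) ^ 2) := by
  have hv2 : ContDiffAt ℝ 2 v x :=
    (hv.contDiffAt (hΩ.mem_nhds hx)).of_le (WithTop.coe_le_coe.2 le_top)
  have hq : 0 < gradSq v x := (gradSq_nonneg v x).lt_of_ne' hgrad
  have hJ : gradSq v x ^ 3 * jFrobSq (Wcomp v) x =
      hessGradPerp v x ^ 2 + (p - 1) ^ 2 * infLap v x ^ 2 := by
    rw [gradSq_pow_three_mul_jFrobSq_Wcomp hv2 hgrad]
    linear_combination (gradSq v x * lap v x - p * infLap v x) * hpl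
  have hΛ : gradSq v x ^ 3 * (hessGradSq v x / gradSq v x ^ 2) =
      infLap v x ^ 2 + hessGradPerp v x ^ 2 := by
    rw [← gradSq_mul_hessGradSq]
    field_simp
  obtain ⟨hp_eq, hp_gt, hp_lt⟩ := sum_sq_comparisons (pow_pos hq 3) hJ hΛ
  exact ⟨fun h => hp_eq (by rw [h]; norm_num), fun h => hp_gt (by nlinarith),
    fun h => hp_lt (by nlinarith)⟩
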